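/- Let n, m, p, r be positive integers, A ∈ ℝ^{n×n}, B ∈ ℝ^{n×m}, and filter matrices A_ψ ∈ ℝ^{p×p}, B_ψ^v ∈ ℝ^{p×n}, B_ψ^y ∈ ℝ^{p×n}, C_ψ ∈ ℝ^{r×p}, D_ψ^v ∈ ℝ^{r×n}, D_ψ^y ∈ ℝ^{r×n}, and a symmetric matrix M_g ∈ ℝ^{r×r}. Let π : ℝⁿ → ℝᵐ be differentiable with π(0) = 0 and ξ̲_{ij} ≤ ∂π_i/∂x_j(x) ≤ ξ̄_{ij} for all x ∈ ℝⁿ, i ∈ {1,…,m}, j ∈ {1,…,n}. Suppose there exist a symmetric positive semidefinite matrix P ∈ ℝ^{(n+p)×(n+p)}, nonnegative multipliers λ_{ij} ≥ 0, and a scalar γ > 0 such that for every nonzero tuple (x_G, ψ, q, v, e) ∈ ℝⁿ × ℝ^p × ℝ^{m×n} × ℝⁿ × ℝᵐ, writing x̄ = (x_G, ψ) ∈ ℝ^{n+p}, w ∈ ℝᵐ with w_i = Σ_{j=1}^n q_{ij}, and z = D_ψ^y x_G + C_ψ ψ + D_ψ^v v ∈ ℝ^r, the strict inequality 2 x̄ᵀ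 P (A x_G + B w + B e + v, B_ψ^y x_G + A_ψ ψ + B_ψ^v v) + zᵀ M_g z + Σ_{i,j} λ_{ij}( (c̄_{ij}² − c_{ij}²) (x_G)_j² + 2 c_{ij} q_{ij} (x_G)_j − q_{ij}² ) + γ⁻¹ |x_G|² − γ |e|² < 0 holds. Then for every continuous e : [0,∞) → ℝᵐ, every continuous g : [0,∞) × ℝⁿ → ℝⁿ, and every continuously differentiable pair of trajectories x_G : [0,∞) → ℝⁿ, ψ : [0,∞) → ℝ^p satisfying x_G(0) = 0, ψ(0) = 0, x_G′(t) = A x_G(t) + B (π(x_G(t)) + e(t)) + v(t) and ψ′(t) = A_ψ ψ(t) + B_ψ^v v(t) + B_ψ^y x_G(t) where v(t) = g(t, x_G(t)), and such that the hard IQC condition ∫₀ᵀ z(t)ᵀ M_g z(t) dt ≥ 0 holds for all T ≥ 0 with z(t) = C_ψ ψ(t) + D_ψ^v v(t) + D_ψ^y x_G(t), one has ∫₀ᵀ |x_G(t)|² dt ≤ γ² ∫₀ᵀ |e(t)|² dt for every T ≥ 0. -/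

import Mathlib

/-!
With `x̄ = (x_G, ψ)`, the storage function `V = x̄ᵀ P x̄` vanishes at `t = 0` and is nonnegative.
By the mean value theorem applied to each `π_i` along the ray through `x`, `π_i(x) = ∑_j θ_ij x_j`
with `θ_ij ∈ [ξ̲_ij, ξ̄_ij]`; with `q_ij = θ_ij x_j` every multiplier term of (3.25) equals
`(ξ̄_ij - θ_ij)(θ_ij - ξ̲_ij) x_j² ≥ 0`, so the SDP inequality along the trajectory gives the
dissipation inequality `V' + zᵀ M_g z + γ⁻¹ |x_G|² - γ |e|² ≤ 0`. Integrating over `[0, T]` and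
using `V(T) ≥ 0` and the hard IQC leaves `γ⁻¹ ∫ |x_G|² ≤ γ ∫ |e|²`.
-/

open Matrix Set MeasureTheory

@[simp]
theorem Fin.append_zero_zero {M : Type*} [Zero M] {a b : ℕ} :
    Fin.append (0 : Fin a → M) (0 : Fin b → M) = 0 := by
  funext k
  refine Fin.addCases (fun j => ?_) (fun j => ?_) k <;> simp

section Derivatives

variable {t : ℝ}

theorem HasDerivAt.finAppend {a b : ℕ} {x : ℝ → Fin a → ℝ} {y : ℝ → Fin b → ℝ}
    {x' : Fin a → ℝ} {y' : Fin b → ℝ} (hx : HasDerivAt x x' t) (hy : HasDerivAt y y' t) :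
    HasDerivAt (fun s => Fin.append (x s) (y s)) (Fin.append x' y') t :=
  hasDerivAt_pi.2 fun k => Fin.addCases (by simpa using hasDerivAt_pi.1 hx ·)
    (by simpa using hasDerivAt_pi.1 hy ·) k

variable {ι κ : Type*} [Fintype ι] [Fintype κ]

theorem HasDerivAt.dotProduct {u w : ℝ → ι → ℝ} {u' w' : ι → ℝ}
    (hu : HasDerivAt u u' t) (hw : HasDerivAt w w' t) :
    HasDerivAt (fun s => u s ⬝ᵥ w s) (u' ⬝ᵥ w t + u t ⬝ᵥ w') t := by
  simp only [_root_.dotProduct, ← Finset.sum_add_distrib]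
  exact HasDerivAt.fun_sum fun k _ => (hasDerivAt_pi.1 hu k).mul (hasDerivAt_pi.1 hw k)

theorem HasDerivAt.matrix_mulVec (M : Matrix κ ι ℝ) {u : ℝ → ι → ℝ} {u' : ι → ℝ}
    (hu : HasDerivAt u u' t) : HasDerivAt (fun s => M *ᵥ u s) (M *ᵥ u') t :=
  (LinearMap.toContinuousLinearMap M.mulVecLin).hasFDerivAt.comp_hasDerivAt t hu

theorem HasDerivAt.dotProduct_mulVec_self {P : Matrix ι ι ℝ} (hP : P.IsSymm)
    {u : ℝ → ι → ℝ} {u' : ι → ℝ} (hu : HasDerivAt u u' t) :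
    HasDerivAt (fun s => u s ⬝ᵥ P *ᵥ u s) (2 * (u t ⬝ᵥ P *ᵥ u')) t := by
  convert hu.dotProduct (hu.matrix_mulVec P) using 1
  rw [dotProduct_mulVec, ← mulVec_transpose, hP.eq, dotProduct_comm]
  ring

end Derivatives

theorem exists_sector_coeffs {ι κ : Type*} [Fintype ι] [DecidableEq ι]
    {f : (ι → ℝ) → κ → ℝ} (hf : Differentiable ℝ f) (hf0 : f 0 = 0) {lo hi : κ → ι → ℝ}
    (hbounds : ∀ x i j, lo i j ≤ fderiv ℝ f x (Pi.single j 1) i ∧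
      fderiv ℝ f x (Pi.single j 1) i ≤ hi i j)
    (x : ι → ℝ) :
    ∃ θ : κ → ι → ℝ, (∀ i j, lo i j ≤ θ i j ∧ θ i j ≤ hi i j) ∧
      ∀ i, f x i = ∑ j, θ i j * x j := by
  have hmvt : ∀ i, ∃ y, f x i = fderiv ℝ f y x i := by
    intro i
    obtain ⟨y, -, hy⟩ := domain_mvt (f := fun y => f y i) (x := 0) (y := x)
      (fun y _ => (hasFDerivAt_pi'.1 (hf y).hasFDerivAt i).hasFDerivWithinAt)
      convex_univ (mem_univ _) (mem_univ _)
    exact ⟨y, by simpa [hf0] using hy⟩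
  choose y hy using hmvt
  refine ⟨fun i j => fderiv ℝ f (y i) (Pi.single j 1) i, fun i j => hbounds (y i) i j,
    fun i => ?_⟩
  conv_lhs => rw [hy i, pi_eq_sum_univ' x]
  simp [mul_comm]

/-- The multiplier term of (3.25), `(c̄² - c²) x² + 2 c q x - q²` with `c = (lo + hi) / 2` and
`c̄ = hi - c`. -/
noncomputable def sectorForm (lo hi x q : ℝ) : ℝ :=
  ((hi - (lo + hi) / 2) ^ 2 - ((lo + hi) / 2) ^ 2) * x ^ 2 + 2 * ((lo + hi) / 2) * q * x - q ^ 2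

theorem sectorForm_mul_self (lo hi θ x : ℝ) :
    sectorForm lo hi x (θ * x) = (hi - θ) * (θ - lo) * x ^ 2 := by
  unfold sectorForm
  ring

theorem sectorForm_mul_self_nonneg {lo hi θ : ℝ} (hlo : lo ≤ θ) (hhi : θ ≤ hi) (x : ℝ) :
    0 ≤ sectorForm lo hi x (θ * x) := by
  rw [sectorForm_mul_self]
  exact mul_nonneg (mul_nonneg (sub_nonneg.2 hhi) (sub_nonneg.2 hlo)) (sq_nonneg x)

theorem dissipation_le_zero_of_sdp {n m p r : ℕ}
    {A : Matrix (Fin n) (Fin n) ℝ} {B : Matrix (Fin n) (Fin m) ℝ}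
    {Aψ : Matrix (Fin p) (Fin p) ℝ} {Bψv Bψy : Matrix (Fin p) (Fin n) ℝ}
    {Cψ : Matrix (Fin r) (Fin p) ℝ} {Dψv Dψy : Matrix (Fin r) (Fin n) ℝ}
    {Mg : Matrix (Fin r) (Fin r) ℝ} {ξlo ξhi : Fin m → Fin n → ℝ}
    {pol : (Fin n → ℝ) → Fin m → ℝ} {P : Matrix (Fin (n + p)) (Fin (n + p)) ℝ}
    {lam : Fin m → Fin n → ℝ} {γ : ℝ}
    (hdiff : Differentiable ℝ pol) (hpol0 : pol 0 = 0)
    (hgrad : ∀ x : Fin n → ℝ, ∀ i j,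
      ξlo i j ≤ fderiv ℝ pol x (Pi.single j 1) i ∧
      fderiv ℝ pol x (Pi.single j 1) i ≤ ξhi i j)
    (hlam : ∀ i j, 0 ≤ lam i j)
    (hSDP : ∀ (x : Fin n → ℝ) (ψ : Fin p → ℝ) (q : Fin m → Fin n → ℝ)
        (v : Fin n → ℝ) (e : Fin m → ℝ),
      (x, ψ, q, v, e) ≠ 0 →
      2 * (Fin.append x ψ ⬝ᵥ P *ᵥ Fin.append
            (A *ᵥ x + B *ᵥ (fun i => ∑ j, q i j) + B *ᵥ e + v)
            (Bψy *ᵥ x + Aψ *ᵥ ψ + Bψv *ᵥ v))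
        + (Dψy *ᵥ x + Cψ *ᵥ ψ + Dψv *ᵥ v) ⬝ᵥ Mg *ᵥ (Dψy *ᵥ x + Cψ *ᵥ ψ + Dψv *ᵥ v)
        + ∑ i, ∑ j, lam i j * sectorForm (ξlo i j) (ξhi i j) (x j) (q i j)
        + γ⁻¹ * ∑ j, x j ^ 2 - γ * ∑ i, e i ^ 2 < 0)
    (x : Fin n → ℝ) (ψ : Fin p → ℝ) (v : Fin n → ℝ) (e : Fin m → ℝ) :
    2 * (Fin.append x ψ ⬝ᵥ P *ᵥ Fin.append
          (A *ᵥ x + B *ᵥ (pol x + e) + v) (Aψ *ᵥ ψ + Bψv *ᵥ v + Bψy *ᵥ x))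
      + (Cψ *ᵥ ψ + Dψv *ᵥ v + Dψy *ᵥ x) ⬝ᵥ Mg *ᵥ (Cψ *ᵥ ψ + Dψv *ᵥ v + Dψy *ᵥ x)
      + γ⁻¹ * ∑ j, x j ^ 2 - γ * ∑ i, e i ^ 2 ≤ 0 := by
  obtain ⟨θ, hθ, hpolθ⟩ := exists_sector_coeffs hdiff hpol0 hgrad x
  set q : Fin m → Fin n → ℝ := fun i j => θ i j * x j
  have hw : (fun i => ∑ j, q i j) = pol x := funext fun i => (hpolθ i).symm
  have hsector : 0 ≤ ∑ i, ∑ j, lam i j * sectorForm (ξlo i j) (ξhi i j) (x j) (q i j) :=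
    Finset.sum_nonneg fun i _ => Finset.sum_nonneg fun j _ =>
      mul_nonneg (hlam i j) (sectorForm_mul_self_nonneg (hθ i j).1 (hθ i j).2 _)
  rcases eq_or_ne (x, ψ, q, v, e) 0 with h0 | h0
  · obtain ⟨rfl, rfl, -, rfl, rfl⟩ : x = 0 ∧ ψ = 0 ∧ q = 0 ∧ v = 0 ∧ e = 0 := by
      simpa [Prod.ext_iff] using h0
    simp [hpol0]
  · have hneg := hSDP x ψ q v e h0
    have hx' : A *ᵥ x + B *ᵥ (pol x + e) + v = A *ᵥ x + B *ᵥ pol x + B *ᵥ e + v := by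
      rw [mulVec_add]; abel
    have hψ' : Aψ *ᵥ ψ + Bψv *ᵥ v + Bψy *ᵥ x = Bψy *ᵥ x + Aψ *ᵥ ψ + Bψv *ᵥ v := by abel
    have hz : Cψ *ᵥ ψ + Dψv *ᵥ v + Dψy *ᵥ x = Dψy *ᵥ x + Cψ *ᵥ ψ + Dψv *ᵥ v := by abel
    rw [hw] at hneg
    rw [hx', hψ', hz]
    linarith

theorem integral_nonneg_of_dissipation {V V' s : ℝ → ℝ} {T : ℝ} (hT : 0 ≤ T)
    (hV : ∀ t ∈ Icc 0 T, HasDerivAt V (V' t) t) (hs : IntervalIntegrable s volume 0 T)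
    (hdiss : ∀ t ∈ Ioo 0 T, V' t ≤ s t) (hV0 : V 0 = 0) (hVT : 0 ≤ V T) :
    0 ≤ ∫ t in 0..T, s t := by
  have := intervalIntegral.sub_le_integral_of_hasDeriv_right_of_le hT
    (fun t ht => (hV t ht).continuousAt.continuousWithinAt)
    (fun t ht => (hV t (Ioo_subset_Icc_self ht)).hasDerivWithinAt)
    ((intervalIntegrable_iff_integrableOn_Icc_of_le hT).1 hs) hdiss
  linarith

theorem nonlinear_stability_certificate_general
    (n m p r : ℕ)
    (A : Matrix (Fin n) (Fin n) ℝ) (B : Matrix (Fin n) (Fin m) ℝ)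
    (Aψ : Matrix (Fin p) (Fin p) ℝ) (Bψv : Matrix (Fin p) (Fin n) ℝ)
    (Bψy : Matrix (Fin p) (Fin n) ℝ) (Cψ : Matrix (Fin r) (Fin p) ℝ)
    (Dψv : Matrix (Fin r) (Fin n) ℝ) (Dψy : Matrix (Fin r) (Fin n) ℝ)
    (Mg : Matrix (Fin r) (Fin r) ℝ)
    (ξlo ξhi : Fin m → Fin n → ℝ)
    (pol : (Fin n → ℝ) → (Fin m → ℝ))
    (hdiff : Differentiable ℝ pol) (hpol0 : pol 0 = 0)
    (hgrad : ∀ x : Fin n → ℝ, ∀ i j,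
      ξlo i j ≤ fderiv ℝ pol x (Pi.single j 1) i ∧
      fderiv ℝ pol x (Pi.single j 1) i ≤ ξhi i j)
    (P : Matrix (Fin (n + p)) (Fin (n + p)) ℝ)
    (hPsymm : P.IsSymm) (hPpsd : P.PosSemidef)
    (lam : Fin m → Fin n → ℝ) (hlam : ∀ i j, 0 ≤ lam i j)
    (γ : ℝ) (hγ : 0 < γ)
    (hSDP : ∀ (xG : Fin n → ℝ) (ψ : Fin p → ℝ) (q : Fin m → Fin n → ℝ)
        (v : Fin n → ℝ) (e : Fin m → ℝ),
      (xG, ψ, q, v, e) ≠ 0 →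
      2 * (Fin.append xG ψ ⬝ᵥ P.mulVec (Fin.append
            (A.mulVec xG + B.mulVec (fun i => ∑ j, q i j) + B.mulVec e + v)
            (Bψy.mulVec xG + Aψ.mulVec ψ + Bψv.mulVec v)))
        + ((Dψy.mulVec xG + Cψ.mulVec ψ + Dψv.mulVec v) ⬝ᵥ
            Mg.mulVec (Dψy.mulVec xG + Cψ.mulVec ψ + Dψv.mulVec v))
        + (∑ i, ∑ j, lam i j *
            (((ξhi i j - (ξlo i j + ξhi i j) / 2) ^ 2 -
                ((ξlo i j + ξhi i j) / 2) ^ 2) * (xG j) ^ 2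
              + 2 * ((ξlo i j + ξhi i j) / 2) * q i j * xG j - (q i j) ^ 2))
        + γ⁻¹ * (∑ j, (xG j) ^ 2) - γ * (∑ i, (e i) ^ 2) < 0) :
    ∀ e : ℝ → (Fin m → ℝ), ContinuousOn e (Set.Ici (0 : ℝ)) →
    ∀ g : ℝ → (Fin n → ℝ) → (Fin n → ℝ),
      Continuous (fun pr : ℝ × (Fin n → ℝ) => g pr.1 pr.2) →
    ∀ xG : ℝ → (Fin n → ℝ), ∀ ψ : ℝ → (Fin p → ℝ),
    xG 0 = 0 → ψ 0 = 0 →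
    (∀ t ∈ Set.Ici (0 : ℝ),
      HasDerivAt xG
        (A.mulVec (xG t) + B.mulVec (pol (xG t) + e t) + g t (xG t)) t) →
    (∀ t ∈ Set.Ici (0 : ℝ),
      HasDerivAt ψ
        (Aψ.mulVec (ψ t) + Bψv.mulVec (g t (xG t)) + Bψy.mulVec (xG t)) t) →
    (∀ T ≥ (0 : ℝ),
      0 ≤ ∫ t in (0 : ℝ)..T,
        ((Cψ.mulVec (ψ t) + Dψv.mulVec (g t (xG t)) + Dψy.mulVec (xG t)) ⬝ᵥ
          Mg.mulVec
            (Cψ.mulVec (ψ t) + Dψv.mulVec (g t (xG t)) + Dψy.mulVec (xG t)))) →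
    ∀ T ≥ (0 : ℝ),
      (∫ t in (0 : ℝ)..T, ∑ j, (xG t j) ^ 2)
        ≤ γ ^ 2 * ∫ t in (0 : ℝ)..T, ∑ i, (e t i) ^ 2 := by
  intro e he g hg xG ψ hx0 hψ0 hxd hψd hIQC T hT
  set z := fun t => Cψ *ᵥ ψ t + Dψv *ᵥ g t (xG t) + Dψy *ᵥ xG t
  have hxc : ContinuousOn xG (Ici 0) := fun t ht => (hxd t ht).continuousAt.continuousWithinAt
  have hψc : ContinuousOn ψ (Ici 0) := fun t ht => (hψd t ht).continuousAt.continuousWithinAt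
  have hvc : ContinuousOn (fun t => g t (xG t)) (Ici 0) :=
    hg.comp_continuousOn (continuousOn_id.prodMk hxc)
  have hint {f : ℝ → ℝ} (hf : ContinuousOn f (Ici 0)) : IntervalIntegrable f volume 0 T :=
    (hf.mono (by simp [uIcc_of_le hT, Icc_subset_Ici_self])).intervalIntegrable
  have hsupply := integral_nonneg_of_dissipation
    (s := fun t => γ * ∑ i, e t i ^ 2 - γ⁻¹ * ∑ j, xG t j ^ 2 - z t ⬝ᵥ Mg *ᵥ z t) hT
    (fun t ht => ((hxd t ht.1).finAppend (hψd t ht.1)).dotProduct_mulVec_self hPsymm)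
    (hint (by fun_prop))
    (fun t _ => by
      have := dissipation_le_zero_of_sdp hdiff hpol0 hgrad hlam hSDP
        (xG t) (ψ t) (g t (xG t)) (e t)
      linarith)
    (by simp [hx0, hψ0]) (hPpsd.dotProduct_mulVec_nonneg _)
  rw [intervalIntegral.integral_sub ((hint (by fun_prop)).sub (hint (by fun_prop)))
      (hint (by fun_prop)), intervalIntegral.integral_sub (hint (by fun_prop)) (hint (by fun_prop)),
    intervalIntegral.integral_const_mul, intervalIntegral.integral_const_mul] at hsupply
  have hgain : γ⁻¹ * ∫ t in (0 : ℝ)..T, ∑ j, (xG t j) ^ 2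
      ≤ γ * ∫ t in (0 : ℝ)..T, ∑ i, (e t i) ^ 2 := by linarith [hIQC T hT]
  rwa [inv_mul_le_iff₀ hγ, ← mul_assoc, ← sq] at hgain

/-- Theorem 3.8, thm:nltv_stable: if the SDP quadratic form of
equation (3.25) (dissipation form, including the IQC filter state `ψ` and the
filtered output `z`) is strictly negative on nonzero `(x_G, ψ, q, v, e)`, then
every trajectory of the nonlinear system `x_G' = A x_G + B (π(x_G) + e) + v`,
`ψ' = A_ψ ψ + B_ψ^v v + B_ψ^y x_G` with `v(t) = g(t, x_G(t))` starting at `0`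
and satisfying the hard IQC `∫₀ᵀ zᵀ M_g z ≥ 0` obeys the finite `L₂`-gain
bound `∫₀ᵀ |x_G|² ≤ γ² ∫₀ᵀ |e|²` for all `T ≥ 0`.
Here `c i j = (ξlo i j + ξhi i j)/2`, `cbar i j = ξhi i j - c i j`, and
`w i = ∑ j, q i j`. -/
theorem nonlinear_stability_certificate
    (n m p r : ℕ) (hn : 0 < n) (hm : 0 < m) (hp : 0 < p) (hr : 0 < r)
    (A : Matrix (Fin n) (Fin n) ℝ) (B : Matrix (Fin n) (Fin m) ℝ)
    (Aψ : Matrix (Fin p) (Fin p) ℝ) (Bψv : Matrix (Fin p) (Fin n) ℝ)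
    (Bψy : Matrix (Fin p) (Fin n) ℝ) (Cψ : Matrix (Fin r) (Fin p) ℝ)
    (Dψv : Matrix (Fin r) (Fin n) ℝ) (Dψy : Matrix (Fin r) (Fin n) ℝ)
    (Mg : Matrix (Fin r) (Fin r) ℝ) (hMg : Mg.IsSymm)
    (ξlo ξhi : Fin m → Fin n → ℝ) (hξ : ∀ i j, ξlo i j ≤ ξhi i j)
    (pol : (Fin n → ℝ) → (Fin m → ℝ))
    (hdiff : Differentiable ℝ pol) (hpol0 : pol 0 = 0)
    (hgrad : ∀ x : Fin n → ℝ, ∀ i j,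
      ξlo i j ≤ fderiv ℝ pol x (Pi.single j 1) i ∧
      fderiv ℝ pol x (Pi.single j 1) i ≤ ξhi i j)
    (P : Matrix (Fin (n + p)) (Fin (n + p)) ℝ)
    (hPsymm : P.IsSymm) (hPpsd : P.PosSemidef)
    (lam : Fin m → Fin n → ℝ) (hlam : ∀ i j, 0 ≤ lam i j)
    (γ : ℝ) (hγ : 0 < γ)
    (hSDP : ∀ (xG : Fin n → ℝ) (ψ : Fin p → ℝ) (q : Fin m → Fin n → ℝ)
        (v : Fin n → ℝ) (e : Fin m → ℝ),
      (xG, ψ, q, v, e) ≠ 0 →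
      2 * (Fin.append xG ψ ⬝ᵥ P.mulVec (Fin.append
            (A.mulVec xG + B.mulVec (fun i => ∑ j, q i j) + B.mulVec e + v)
            (Bψy.mulVec xG + Aψ.mulVec ψ + Bψv.mulVec v)))
        + ((Dψy.mulVec xG + Cψ.mulVec ψ + Dψv.mulVec v) ⬝ᵥ
            Mg.mulVec (Dψy.mulVec xG + Cψ.mulVec ψ + Dψv.mulVec v))
        + (∑ i, ∑ j, lam i j *
            (((ξhi i j - (ξlo i j + ξhi i j) / 2) ^ 2 -
                ((ξlo i j + ξhi i j) / 2) ^ 2) * (xG j) ^ 2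
              + 2 * ((ξlo i j + ξhi i j) / 2) * q i j * xG j - (q i j) ^ 2))
        + γ⁻¹ * (∑ j, (xG j) ^ 2) - γ * (∑ i, (e i) ^ 2) < 0) :
    ∀ e : ℝ → (Fin m → ℝ), ContinuousOn e (Set.Ici (0 : ℝ)) →
    ∀ g : ℝ → (Fin n → ℝ) → (Fin n → ℝ),
      Continuous (fun pr : ℝ × (Fin n → ℝ) => g pr.1 pr.2) →
    ∀ xG : ℝ → (Fin n → ℝ), ∀ ψ : ℝ → (Fin p → ℝ),
    xG 0 = 0 → ψ 0 = 0 →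
    (∀ t ∈ Set.Ici (0 : ℝ),
      HasDerivAt xG
        (A.mulVec (xG t) + B.mulVec (pol (xG t) + e t) + g t (xG t)) t) →
    (∀ t ∈ Set.Ici (0 : ℝ),
      HasDerivAt ψ
        (Aψ.mulVec (ψ t) + Bψv.mulVec (g t (xG t)) + Bψy.mulVec (xG t)) t) →
    (∀ T ≥ (0 : ℝ),
      0 ≤ ∫ t in (0 : ℝ)..T,
        ((Cψ.mulVec (ψ t) + Dψv.mulVec (g t (xG t)) + Dψy.mulVec (xG t)) ⬝ᵥ
          Mg.mulVec
            (Cψ.mulVec (ψ t) + Dψv.mulVec (g t (xG t)) + Dψy.mulVec (xG t)))) →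
    ∀ T ≥ (0 : ℝ),
      (∫ t in (0 : ℝ)..T, ∑ j, (xG t j) ^ 2)
        ≤ γ ^ 2 * ∫ t in (0 : ℝ)..T, ∑ i, (e t i) ^ 2 :=
  nonlinear_stability_certificate_general n m p r A B Aψ Bψv Bψy Cψ Dψv Dψy Mg ξlo ξhi pol hdiff
    hpol0 hgrad P hPsymm hPpsd lam hlam γ hγ hSDP
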